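/- Let u : ℝ² → ℝ be continuously differentiable and define A(x,y,z) = 2·log|z| + z·u(x,y). Then for all x, y ∈ ℝ and all z ≠ 0, the Rashevsky identity A''(x,y,z)·(u_x(x,y)·z²/2) + z·A'_y + A'_x − A_y = 0 holds; that is, the geodesic equation of the corresponding two-dimensional Finsler metric L = 2p·log|q/p| + q·u(x,y) is 2y'' = u_x·y'², whose right-hand side is a polynomial of degree at most three in y'. -/

import Mathlib

noncomputable section

/-- Partial derivative in the third variable `z`. -/
def pZ (A : ℝ → ℝ → ℝ → ℝ) : ℝ → ℝ → ℝ → ℝ := fun x y z => deriv (fun t => A x y t) z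

/-- Partial derivative in the first variable `x`. -/
def pX (A : ℝ → ℝ → ℝ → ℝ) : ℝ → ℝ → ℝ → ℝ := fun x y z => deriv (fun t => A t y z) x

/-- Partial derivative in the second variable `y`. -/
def pY (A : ℝ → ℝ → ℝ → ℝ) : ℝ → ℝ → ℝ → ℝ := fun x y z => deriv (fun t => A x t z) y

/-- The associated fundamental function `A(x,y,z) = 2·log|z| + z·u(x,y)`. -/
def Alog (u : ℝ → ℝ → ℝ) : ℝ → ℝ → ℝ → ℝ :=
  fun x y z => 2 * Real.log |z| + z * u x y

section Alog

variable (u : ℝ → ℝ → ℝ)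

lemma pZ_Alog {z : ℝ} (hz : z ≠ 0) (x y : ℝ) : pZ (Alog u) x y z = 2 * z⁻¹ + u x y := by
  have hlog : HasDerivAt (fun t => 2 * Real.log t + t * u x y) (2 * z⁻¹ + 1 * u x y) z :=
    ((Real.hasDerivAt_log hz).const_mul 2).add ((hasDerivAt_id z).mul_const (u x y))
  simp only [pZ, Alog, Real.log_abs, hlog.deriv, one_mul]

lemma pZ_pZ_Alog {z : ℝ} (hz : z ≠ 0) (x y : ℝ) : pZ (pZ (Alog u)) x y z = -2 / z ^ 2 := by
  have heq : (fun t => pZ (Alog u) x y t) =ᶠ[nhds z] fun t => 2 * t⁻¹ + u x y := by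
    filter_upwards [eventually_ne_nhds hz] with t ht using pZ_Alog u ht x y
  have hinv : HasDerivAt (fun t => 2 * t⁻¹ + u x y) (2 * -(z ^ 2)⁻¹) z :=
    ((hasDerivAt_inv hz).const_mul 2).add_const (u x y)
  rw [pZ, heq.deriv_eq, hinv.deriv]
  ring

lemma pX_pZ_Alog {z : ℝ} (hz : z ≠ 0) (x y : ℝ) :
    pX (pZ (Alog u)) x y z = deriv (fun t => u t y) x := by
  simp only [pX, pZ_Alog u hz, deriv_const_add]

lemma pY_pZ_Alog {z : ℝ} (hz : z ≠ 0) (x y : ℝ) :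
    pY (pZ (Alog u)) x y z = deriv (fun t => u x t) y := by
  simp only [pY, pZ_Alog u hz, deriv_const_add]

lemma pY_Alog (x y z : ℝ) : pY (Alog u) x y z = z * deriv (fun t => u x t) y := by
  simp only [pY, Alog, deriv_const_add, deriv_const_mul_field']

end Alog

theorem stmt_8_general (u : ℝ → ℝ → ℝ) :
    ∀ x y : ℝ, ∀ z : ℝ, z ≠ 0 →
      pZ (pZ (Alog u)) x y z * (deriv (fun w => u w y) x * z ^ 2 / 2)
        + z * pY (pZ (Alog u)) x y z + pX (pZ (Alog u)) x y z - pY (Alog u) x y z = 0 := by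
  intro x y z hz
  rw [pZ_pZ_Alog u hz, pY_pZ_Alog u hz, pX_pZ_Alog u hz, pY_Alog]
  field_simp
  ring

/-- for `A(x,y,z) = 2 log|z| + z·u(x,y)` and `z ≠ 0`, the Rashevsky identity
`A''·(uₓ·z²/2) + z·A'_y + A'_x − A_y = 0` holds; the geodesic equation is
`2y'' = uₓ·y'²`, whose right-hand side is a polynomial of degree ≤ 3 in `y'`. -/
theorem stmt_8 (u : ℝ → ℝ → ℝ) (hu : ContDiff ℝ 1 (fun v : ℝ × ℝ => u v.1 v.2)) :
    ∀ x y : ℝ, ∀ z : ℝ, z ≠ 0 →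
      pZ (pZ (Alog u)) x y z * (deriv (fun w => u w y) x * z ^ 2 / 2)
        + z * pY (pZ (Alog u)) x y z + pX (pZ (Alog u)) x y z - pY (Alog u) x y z = 0 :=
  stmt_8_general u
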